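/- Let G be a phylogenetic network, let r = (v_n)_{n≥0} be a ray of G, and let x be the end of G containing r. Then v̄_n → x̄ in the metric space (𝒦, d_𝒦); equivalently, for every k ≥ 0 there exists N such that [x̄]_k = [v̄_n]_k for all n ≥ N. -/
import Mathlib


open Filter Topology

namespace GalledB2

/-- A (possibly infinite) rooted digraph: adjacency relation and a root. -/
structure INet (V : Type*) where
  adj : V → V → Prop
  root : V

/-- `G` is a phylogenetic network: a locally finite DAG in which the root has
in-degree 0 and every vertex is reachable from the root (the countability of the
vertex set is a typeclass assumption on `V`). -/
def IsPhyloNet {V : Type*} (G : INet V) : Prop :=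
  (∀ v, {u | G.adj v u}.Finite ∧ {u | G.adj u v}.Finite) ∧
  (∀ v, ¬ Relation.TransGen G.adj v v) ∧
  (∀ u, ¬ G.adj u G.root) ∧
  (∀ v, Relation.ReflTransGen G.adj G.root v)

/-- `anc G v = v̄` is the set of ancestors of `v` (including `v`). -/
def anc {V : Type*} (G : INet V) (v : V) : Set V :=
  {u | Relation.ReflTransGen G.adj u v}

/-- `𝒦`: the collection of ancestor-closed sets of vertices. -/
def K {V : Type*} (G : INet V) : Set (Set V) :=
  {S | ∀ u ∈ S, anc G u ⊆ S}

/-- A ray: a one-way infinite directed path. -/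
def IsRay {V : Type*} (G : INet V) (r : ℕ → V) : Prop :=
  ∀ n, G.adj (r n) (r (n + 1))

/-- Two rays are co-directional if some ray shares infinitely many vertices with
each of them. -/
def CoDir {V : Type*} (G : INet V) (r r' : ℕ → V) : Prop :=
  ∃ r'' : ℕ → V, IsRay G r'' ∧
    (Set.range r'' ∩ Set.range r).Infinite ∧
    (Set.range r'' ∩ Set.range r').Infinite

/-- An end of `G`: an equivalence class of rays for the co-directionality relation. -/
def IsEnd {V : Type*} (G : INet V) (x : Set (ℕ → V)) : Prop :=
  ∃ r, IsRay G r ∧ x = {r' | IsRay G r' ∧ CoDir G r' r}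

/-- `x̄`: the set of vertices lying on some ray of the end `x`. -/
def endVerts {V : Type*} (G : INet V) (x : Set (ℕ → V)) : Set V :=
  {v | ∃ r ∈ x, ∃ n, r n = v}

/-- The height of a vertex: the minimal length of a directed path from the root. -/
noncomputable def height {V : Type*} (G : INet V) (v : V) : ℕ :=
  sInf {n | ∃ f : ℕ → V, f 0 = G.root ∧ f n = v ∧ ∀ i < n, G.adj (f i) (f (i + 1))}

/-- `[S]_k`: the set of vertices of `S` of height at most `k`. -/
def restr {V : Type*} (G : INet V) (S : Set V) (k : ℕ) : Set V :=
  {v ∈ S | height G v ≤ k}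

/-- The distance `d_𝒦(S,S') = 2^{−N(S,S')}` where
`N(S,S') = sup {n+1 : [S]_n = [S']_n}` (with `sup ∅ = 0` and `2^{−∞} = 0`):
it is the infimum of `1` (the value when no truncations agree) and of the numbers
`2^{−(n+1)}` over the `n` with `[S]_n = [S']_n` (this set of `n` being an initial
segment of ℕ). -/
noncomputable def dK {V : Type*} (G : INet V) (S S' : Set V) : ℝ :=
  sInf ({1} ∪ {x : ℝ | ∃ n : ℕ, restr G S n = restr G S' n ∧ x = (2 : ℝ)⁻¹ ^ (n + 1)})

section Aux

variable {V : Type*} {G : INet V}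

lemma rayReach' {r : ℕ → V} (hr : IsRay G r) (m d : ℕ) :
    Relation.ReflTransGen G.adj (r m) (r (m + d)) := by
  induction d with
  | zero => exact .refl
  | succ d ih => exact ih.tail (hr _)

lemma rayReach {r : ℕ → V} (hr : IsRay G r) {m m' : ℕ} (h : m ≤ m') :
    Relation.ReflTransGen G.adj (r m) (r m') := by
  obtain ⟨d, rfl⟩ := Nat.exists_eq_add_of_le h
  exact rayReach' hr m d

lemma path_of_rtg {a b : V} (h : Relation.ReflTransGen G.adj a b) :
    ∃ t : ℕ, ∃ f : ℕ → V, f 0 = a ∧ f t = b ∧ ∀ i < t, G.adj (f i) (f (i + 1)) := by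
  induction h with
  | refl => exact ⟨0, fun _ => a, rfl, rfl, fun i hi => absurd hi (by omega)⟩
  | @tail b c _ hbc ih =>
      obtain ⟨t, f, h0, ht, hstep⟩ := ih
      refine ⟨t + 1, fun i => if i ≤ t then f i else c, by simp [h0], by simp, ?_⟩
      intro i hi
      rcases Nat.lt_or_ge i t with h' | h'
      · simp only [if_pos h'.le, if_pos (by omega : i + 1 ≤ t)]
        exact hstep i h'
      · have hit : i = t := by omega
        simp only [hit, if_pos le_rfl, if_neg (by omega : ¬ t + 1 ≤ t), ht]
        exact hbc

lemma exists_index_ge {f : ℕ → V} {S : Set V}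
    (h : (Set.range f ∩ S).Infinite) (m : ℕ) : ∃ m' ≥ m, f m' ∈ S := by
  by_contra hc
  push_neg at hc
  apply h
  have hsub : Set.range f ∩ S ⊆ f '' Set.Iio m := by
    rintro v ⟨⟨i, rfl⟩, hv⟩
    refine ⟨i, ?_, rfl⟩
    by_contra h'
    exact hc i (by simpa using h') hv
  exact ((Set.finite_Iio m).image f).subset hsub

lemma ancMono {r : ℕ → V} (hr : IsRay G r) {m n : ℕ} (h : m ≤ n) :
    anc G (r m) ⊆ anc G (r n) := fun _ hu => hu.trans (rayReach hr h)

def pathSet (G : INet V) (n : ℕ) : Set V :=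
  {v | ∃ f : ℕ → V, f 0 = G.root ∧ f n = v ∧ ∀ i < n, G.adj (f i) (f (i + 1))}

lemma pathSet_finite (hfin : ∀ v : V, {u | G.adj v u}.Finite) (n : ℕ) :
    (pathSet G n).Finite := by
  induction n with
  | zero =>
      refine (Set.finite_singleton G.root).subset ?_
      rintro v ⟨f, h0, hn, _⟩
      simp [← h0, ← hn]
  | succ n ih =>
      have hsub : pathSet G (n + 1) ⊆ ⋃ u ∈ pathSet G n, {w | G.adj u w} := by
        rintro v ⟨f, h0, hn, hstep⟩
        exact Set.mem_biUnion ⟨f, h0, rfl, fun i hi => hstep i (by omega)⟩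
          (hn ▸ hstep n (by omega))
      exact (ih.biUnion (fun u _ => hfin u)).subset hsub

lemma height_le_finite (hG : IsPhyloNet G) (k : ℕ) : {v | height G v ≤ k}.Finite := by
  have hsub : {v | height G v ≤ k} ⊆ ⋃ n ∈ Set.Iic k, pathSet G n := by
    intro v hv
    have hne : {n | ∃ f : ℕ → V, f 0 = G.root ∧ f n = v ∧
        ∀ i < n, G.adj (f i) (f (i + 1))}.Nonempty := by
      obtain ⟨t, f, h0, ht, hstep⟩ := path_of_rtg (hG.2.2.2 v)
      exact ⟨t, f, h0, ht, hstep⟩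
    have hmem := Nat.sInf_mem hne
    exact Set.mem_biUnion hv hmem
  exact ((Set.finite_Iic k).biUnion fun n _ => pathSet_finite (fun v => (hG.1 v).1) n).subset hsub

lemma exists_uniform {T : Set V} (hT : T.Finite) {A : ℕ → Set V}
    (hmono : ∀ {m n : ℕ}, m ≤ n → A m ⊆ A n) (h : ∀ v ∈ T, ∃ n, v ∈ A n) :
    ∃ N, ∀ v ∈ T, v ∈ A N := by
  classical
  set g : V → ℕ := fun v => if hv : v ∈ T then (h v hv).choose else 0 with hg
  refine ⟨hT.toFinset.sup g, fun v hv => ?_⟩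
  have h1 : v ∈ A ((h v hv).choose) := (h v hv).choose_spec
  refine hmono ?_ h1
  have h2 : g v = (h v hv).choose := dif_pos hv
  calc (h v hv).choose = g v := h2.symm
    _ ≤ hT.toFinset.sup g := Finset.le_sup (hT.mem_toFinset.mpr hv)

end Aux


/-- **Theorem.** If `r = (v_n)` is a ray of a phylogenetic network `G` and `x` is the
end of `G` containing `r`, then `v̄_n → x̄` in `(𝒦, d_𝒦)`; equivalently, for every
`k` there is `N` such that `[x̄]_k = [v̄_n]_k` for all `n ≥ N`. -/
theorem anc_tendsto_endVerts {V : Type*} [Countable V]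
    (G : INet V) (hG : IsPhyloNet G)
    (r : ℕ → V) (hr : IsRay G r)
    (x : Set (ℕ → V)) (hx : IsEnd G x) (hrx : r ∈ x) :
    (∀ k : ℕ, ∃ N : ℕ, ∀ n ≥ N,
        restr G (endVerts G x) k = restr G (anc G (r n)) k) ∧
    Tendsto (fun n => dK G (anc G (r n)) (endVerts G x)) atTop (𝓝 0) := by
  obtain ⟨s, hs, rfl⟩ := hx
  have hrs : CoDir G r s := hrx.2
  obtain ⟨b, hb, hbr, hbs⟩ := hrs
  -- Key equality: endVerts x = ⋃ n, anc (r n)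
  have key : endVerts G {r' | IsRay G r' ∧ CoDir G r' s} = ⋃ n, anc G (r n) := by
    apply Set.Subset.antisymm
    · rintro v ⟨r', hr'x, m, rfl⟩
      obtain ⟨hr', a, ha, har', has⟩ := hr'x
      -- chain: r' m ≼ r' m' = a i ≼ a i' = s j ≼ s j' = b l ≼ b l' = r p
      obtain ⟨m', hm', i, hi⟩ := exists_index_ge (Set.inter_comm _ _ ▸ har') m
      obtain ⟨i', hi', j, hj⟩ := exists_index_ge has i
      obtain ⟨j', hj', l, hl⟩ := exists_index_ge (Set.inter_comm _ _ ▸ hbs) j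
      obtain ⟨l', hl', p, hp⟩ := exists_index_ge hbr l
      refine Set.mem_iUnion.mpr ⟨p, ?_⟩
      have c1 : Relation.ReflTransGen G.adj (r' m) (a i) := hi ▸ rayReach hr' hm'
      have c2 : Relation.ReflTransGen G.adj (a i) (s j) := hj ▸ rayReach ha hi'
      have c3 : Relation.ReflTransGen G.adj (s j) (b l) := hl ▸ rayReach hs hj'
      have c4 : Relation.ReflTransGen G.adj (b l) (r p) := hp ▸ rayReach hb hl'
      exact ((c1.trans c2).trans c3).trans c4
    · rintro v hv
      obtain ⟨_, ⟨n, rfl⟩, hvn⟩ := hv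
      obtain ⟨t, f, h0, ht, hstep⟩ := path_of_rtg hvn
      set r' : ℕ → V := fun i => if i ≤ t then f i else r (n + (i - t)) with hr'def
      have hr'ray : IsRay G r' := by
        intro i
        rcases Nat.lt_or_ge i t with h' | h'
        · simp only [hr'def, if_pos h'.le, if_pos (by omega : i + 1 ≤ t)]
          exact hstep i h'
        · rcases Nat.eq_or_lt_of_le h' with h'' | h''
          · simp only [hr'def, ← h'', if_pos le_rfl,
              if_neg (by omega : ¬ t + 1 ≤ t), ht]
            have e : t + 1 - t = 1 := by omega
            rw [e]
            exact hr n
          · simp only [hr'def, if_neg (by omega : ¬ i ≤ t),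
              if_neg (by omega : ¬ i + 1 ≤ t)]
            have h1 : i + 1 - t = (i - t) + 1 := by omega
            rw [h1, ← Nat.add_assoc]
            exact hr (n + (i - t))
      have htail : ∀ j, n ≤ j → r j ∈ Set.range r' := by
        intro j hj
        rcases Nat.eq_or_lt_of_le hj with h' | h'
        · exact ⟨t, by simp [hr'def, ht, ← h']⟩
        · refine ⟨t + (j - n), ?_⟩
          simp only [hr'def, if_neg (by omega : ¬ t + (j - n) ≤ t)]
          congr 1
          omega
      have hr'x : r' ∈ {r' | IsRay G r' ∧ CoDir G r' s} := by
        refine ⟨hr'ray, b, hb, ?_, hbs⟩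
        have hdiff : ((Set.range b ∩ Set.range r) \ (r '' Set.Iio n)).Infinite :=
          hbr.diff ((Set.finite_Iio n).image r)
        refine hdiff.mono ?_
        rintro w ⟨⟨hwb, ⟨j, rfl⟩⟩, hwnot⟩
        refine ⟨hwb, htail j ?_⟩
        by_contra h'
        exact hwnot ⟨j, Set.mem_Iio.mpr (by omega), rfl⟩
      exact ⟨r', hr'x, 0, by simp [hr'def, h0]⟩
  -- Part 1
  have part1 : ∀ k : ℕ, ∃ N : ℕ, ∀ n ≥ N,
      restr G (endVerts G {r' | IsRay G r' ∧ CoDir G r' s}) k = restr G (anc G (r n)) k := by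
    intro k
    have hTfin : (restr G (endVerts G {r' | IsRay G r' ∧ CoDir G r' s}) k).Finite :=
      (height_le_finite hG k).subset (fun v hv => hv.2)
    have hmem : ∀ v ∈ restr G (endVerts G {r' | IsRay G r' ∧ CoDir G r' s}) k,
        ∃ n, v ∈ anc G (r n) := by
      intro v hv
      exact Set.mem_iUnion.mp (key ▸ hv.1)
    obtain ⟨N, hN⟩ := exists_uniform hTfin (fun h => ancMono hr h) hmem
    refine ⟨N, fun n hn => Set.Subset.antisymm ?_ ?_⟩
    · intro v hv
      exact ⟨ancMono hr hn (hN v hv), hv.2⟩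
    · rintro v ⟨hv1, hv2⟩
      exact ⟨key ▸ Set.mem_iUnion.mpr ⟨n, hv1⟩, hv2⟩
  refine ⟨part1, ?_⟩
  -- Part 2
  rw [Metric.tendsto_atTop]
  intro ε hε
  obtain ⟨k, hk⟩ := exists_pow_lt_of_lt_one hε (by norm_num : (2 : ℝ)⁻¹ < 1)
  obtain ⟨N, hN⟩ := part1 k
  refine ⟨N, fun n hn => ?_⟩
  have hbdd : BddBelow ({1} ∪ {y : ℝ | ∃ m : ℕ,
      restr G (anc G (r n)) m = restr G (endVerts G {r' | IsRay G r' ∧ CoDir G r' s}) m ∧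
      y = (2 : ℝ)⁻¹ ^ (m + 1)}) := by
    refine ⟨0, ?_⟩
    rintro y (hy | ⟨m, _, rfl⟩)
    · simp at hy; simp [hy]
    · positivity
  have h1 : dK G (anc G (r n)) (endVerts G {r' | IsRay G r' ∧ CoDir G r' s})
      ≤ (2 : ℝ)⁻¹ ^ (k + 1) :=
    csInf_le hbdd (Or.inr ⟨k, (hN n hn).symm, rfl⟩)
  have h0 : 0 ≤ dK G (anc G (r n)) (endVerts G {r' | IsRay G r' ∧ CoDir G r' s}) := by
    apply Real.sInf_nonneg
    rintro y (hy | ⟨m, _, rfl⟩)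
    · simp at hy; simp [hy]
    · positivity
  rw [Real.dist_eq, sub_zero, abs_of_nonneg h0]
  calc dK G (anc G (r n)) (endVerts G {r' | IsRay G r' ∧ CoDir G r' s})
      ≤ (2 : ℝ)⁻¹ ^ (k + 1) := h1
    _ ≤ (2 : ℝ)⁻¹ ^ k := pow_le_pow_of_le_one (by norm_num) (by norm_num) k.le_succ
    _ < ε := hk

end GalledB2
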